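/- Let C ⊂ S^d be a spherically convex body with diam(C) ≤ π/2, and suppose diam(C) = dist(a,b) for some a, b ∈ C. Let L be the unique lune such that a and b are the centers of the two (d−1)-dimensional hemispheres bounding L. Then C ⊆ L. -/

import Mathlib

open Set Metric
open scoped RealInnerProductSpace

noncomputable section

/-- Euclidean space `E^{d+1}`. -/
abbrev E (d : ℕ) := EuclideanSpace ℝ (Fin (d + 1))

/-- The unit sphere `S^d ⊆ E^{d+1}`. -/
def Sph (d : ℕ) : Set (E d) := Metric.sphere (0 : E d) 1

variable {d : ℕ}

/-- Geodesic (angular) distance on the unit sphere. -/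
def sdist (x y : E d) : ℝ := Real.arccos ⟪x, y⟫

/-- Closed hemisphere with center `p`. -/
def Hemi (p : E d) : Set (E d) := {x ∈ Sph d | 0 ≤ ⟪p, x⟫}

/-- Open hemisphere with center `p`. -/
def openHemi (p : E d) : Set (E d) := {x ∈ Sph d | 0 < ⟪p, x⟫}

/-- Boundary great subsphere of the hemisphere with center `p`. -/
def bdHemi (p : E d) : Set (E d) := {x ∈ Sph d | ⟪p, x⟫ = 0}

/-- Spherical convexity: no antipodal pairs, and the nonnegative cone over the
set is convex (equivalent to being closed under shorter arcs). -/
def SphConvex (C : Set (E d)) : Prop :=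
  (∀ x ∈ C, -x ∉ C) ∧ Convex ℝ {v : E d | ∃ r : ℝ, 0 ≤ r ∧ ∃ x ∈ C, v = r • x}

/-- Spherical convex hull: the smallest spherically convex subset of the
sphere containing `A`. -/
def sConvHull (A : Set (E d)) : Set (E d) := ⋂₀ {C | SphConvex C ∧ C ⊆ Sph d ∧ A ⊆ C}

/-- Interior of `C` relative to the sphere. -/
def sInterior (C : Set (E d)) : Set (E d) :=
  {x ∈ Sph d | ∃ ε > 0, Metric.ball x ε ∩ Sph d ⊆ C}

/-- A spherical convex body: closed, spherically convex, with nonempty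
interior relative to the sphere. -/
def IsBody (C : Set (E d)) : Prop :=
  C ⊆ Sph d ∧ IsClosed C ∧ SphConvex C ∧ (sInterior C).Nonempty

/-- Spherical ball of radius `r` centered at `p`. -/
def sBall (p : E d) (r : ℝ) : Set (E d) := {x ∈ Sph d | sdist p x ≤ r}

/-- Normalization of a vector. -/
def nrm (v : E d) : E d := ‖v‖⁻¹ • v

/-- The center of the `(d-1)`-dimensional hemisphere `bd(G) ∩ H`, where `G`, `H`
are the hemispheres centered at `g`, `h`. -/
def cGH (g h : E d) : E d := nrm (h - ⟪g, h⟫ • g)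

/-- Thickness of the lune `Hemi g ∩ Hemi h`: the geodesic distance between the
centers of its two bounding `(d-1)`-dimensional hemispheres. -/
def lthick (g h : E d) : ℝ := Real.pi - sdist g h

/-- The hemisphere centered at `k` supports `C`. -/
def Supports (k : E d) (C : Set (E d)) : Prop :=
  C ⊆ Hemi k ∧ (bdHemi k ∩ C).Nonempty

/-- Width of `C` determined by a supporting hemisphere centered at `k`:
minimal thickness of a lune `K ∩ K*` over supporting hemispheres `K* ≠ K`. -/
def width (C : Set (E d)) (k : E d) : ℝ :=
  sInf {w | ∃ k' ∈ Sph d, k' ≠ k ∧ k' ≠ -k ∧ Supports k' C ∧ w = lthick k k'}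

/-- Thickness of `C`: minimal thickness of a lune containing `C`. -/
def thick (C : Set (E d)) : ℝ :=
  sInf {w | ∃ g ∈ Sph d, ∃ h ∈ Sph d, g ≠ h ∧ g ≠ -h ∧
    C ⊆ Hemi g ∩ Hemi h ∧ w = lthick g h}

/-- Spherical diameter of a set. -/
def sdiam (C : Set (E d)) : ℝ := sSup {r | ∃ x ∈ C, ∃ y ∈ C, r = sdist x y}

/-- Reduced spherical convex body. -/
def Reduced (R : Set (E d)) : Prop :=
  IsBody R ∧ ∀ Z : Set (E d), IsBody Z → Z ⊆ R → Z ≠ R → thick Z < thick R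

/-- Extreme point of a spherical convex body. -/
def ExtremePt (C : Set (E d)) (e : E d) : Prop := e ∈ C ∧ SphConvex (C \ {e})

/-!
Let `a = cGH g h` and `b = cGH h g` be the centers of the half-spheres bounding the lune. Then
`⟪a, b⟫ = -⟪g, h⟫` and `sin ∠(g, h) • g = b + ⟪g, h⟫ • a`, so `⟪g, x⟫` has the sign of
`⟪b, x⟫ - ⟪a, b⟫ * ⟪a, x⟫`. For `x ∈ C`, diametrality of `a, b` gives `⟪b, x⟫ ≥ ⟪a, b⟫`, the
diameter bound `π / 2` gives `⟪a, b⟫ ≥ 0`, and `⟪a, x⟫ ≤ 1`; hence `⟪g, x⟫ ≥ 0`, and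
symmetrically `⟪h, x⟫ ≥ 0`.
-/

section InnerProductSpace

variable {F : Type*} [NormedAddCommGroup F] [InnerProductSpace ℝ F]

lemma norm_sub_inner_smul_sq {g h : F} (hg : ‖g‖ = 1) (hh : ‖h‖ = 1) :
    ‖h - ⟪g, h⟫ • g‖ ^ 2 = 1 - ⟪g, h⟫ ^ 2 := by
  rw [norm_sub_sq_real, norm_smul, inner_smul_right, real_inner_comm g h, hg, hh,
    Real.norm_eq_abs, mul_one, sq_abs]
  ring

end InnerProductSpace

lemma mem_Sph_iff {x : E d} : x ∈ Sph d ↔ ‖x‖ = 1 := mem_sphere_zero_iff_norm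

lemma norm_smul_nrm (v : E d) : ‖v‖ • nrm v = v := by
  rcases eq_or_ne v 0 with rfl | hv
  · simp [nrm]
  · rw [nrm, smul_smul, mul_inv_cancel₀ (norm_ne_zero_iff.mpr hv), one_smul]

lemma norm_pos_of_nrm_mem_Sph {v : E d} (hv : nrm v ∈ Sph d) : 0 < ‖v‖ := by
  rw [norm_pos_iff]
  rintro rfl
  simp [nrm, mem_Sph_iff] at hv

lemma norm_sub_inner_smul_smul_cGH (g h : E d) : ‖h - ⟪g, h⟫ • g‖ • cGH g h = h - ⟪g, h⟫ • g :=
  norm_smul_nrm _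

section Lune

variable {g h : E d} (hg : ‖g‖ = 1) (hh : ‖h‖ = 1)
include hg hh

lemma norm_sub_inner_smul_comm : ‖g - ⟪h, g⟫ • h‖ = ‖h - ⟪g, h⟫ • g‖ := by
  rw [← sq_eq_sq₀ (norm_nonneg _) (norm_nonneg _), norm_sub_inner_smul_sq hh hg,
    norm_sub_inner_smul_sq hg hh, real_inner_comm]

lemma norm_sub_inner_smul_smul_cGH_swap : ‖h - ⟪g, h⟫ • g‖ • cGH h g = g - ⟪h, g⟫ • h := by
  rw [← norm_sub_inner_smul_comm hg hh]
  exact norm_smul_nrm _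

variable (ht : ⟪g, h⟫ ^ 2 < 1)
include ht

lemma norm_sub_inner_smul_ne_zero : ‖h - ⟪g, h⟫ • g‖ ≠ 0 := by
  have := norm_sub_inner_smul_sq hg hh
  intro h0
  rw [h0] at this
  linarith

lemma inner_cGH_cGH : ⟪cGH g h, cGH h g⟫ = -⟪g, h⟫ := by
  have ha := norm_sub_inner_smul_smul_cGH g h
  have hb := norm_sub_inner_smul_smul_cGH_swap hg hh
  have h2 := norm_sub_inner_smul_sq hg hh
  set s := ‖h - ⟪g, h⟫ • g‖
  have hs : s ^ 2 ≠ 0 := pow_ne_zero 2 (norm_sub_inner_smul_ne_zero hg hh ht)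
  have hgg : ⟪g, g⟫ = 1 := by rw [real_inner_self_eq_norm_sq, hg, one_pow]
  have hhh : ⟪h, h⟫ = 1 := by rw [real_inner_self_eq_norm_sq, hh, one_pow]
  refine mul_left_cancel₀ hs ?_
  calc s ^ 2 * ⟪cGH g h, cGH h g⟫ = ⟪s • cGH g h, s • cGH h g⟫ := by
        rw [real_inner_smul_left, real_inner_smul_right]; ring
    _ = ⟪h - ⟪g, h⟫ • g, g - ⟪h, g⟫ • h⟫ := by
        rw [ha, hb]
    _ = s ^ 2 * -⟪g, h⟫ := by
        rw [h2]
        simp only [inner_sub_left, inner_sub_right, real_inner_smul_left, real_inner_smul_right,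
          hgg, hhh, real_inner_comm g h]
        ring

lemma smul_eq_cGH_add_smul_cGH :
    ‖h - ⟪g, h⟫ • g‖ • g = cGH h g + ⟪g, h⟫ • cGH g h := by
  have ha := norm_sub_inner_smul_smul_cGH g h
  have hb := norm_sub_inner_smul_smul_cGH_swap hg hh
  have h2 := norm_sub_inner_smul_sq hg hh
  set s := ‖h - ⟪g, h⟫ • g‖
  have hs : s ≠ 0 := norm_sub_inner_smul_ne_zero hg hh ht
  refine smul_right_injective (E d) hs ?_
  calc s • s • g = (1 - ⟪g, h⟫ ^ 2) • g := by rw [smul_smul, ← sq, h2]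
    _ = (g - ⟪h, g⟫ • h) + ⟪g, h⟫ • (h - ⟪g, h⟫ • g) := by rw [real_inner_comm]; module
    _ = s • (cGH h g + ⟪g, h⟫ • cGH g h) := by
        rw [smul_add, smul_comm s, ha, hb]

lemma norm_sub_inner_smul_mul_inner (x : E d) :
    ‖h - ⟪g, h⟫ • g‖ * ⟪g, x⟫ =
      ⟪cGH h g, x⟫ - ⟪cGH g h, cGH h g⟫ * ⟪cGH g h, x⟫ := by
  rw [← real_inner_smul_left, smul_eq_cGH_add_smul_cGH hg hh ht, inner_add_left,
    real_inner_smul_left, inner_cGH_cGH hg hh ht]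
  ring

end Lune

lemma sdist_comm (x y : E d) : sdist x y = sdist y x := by
  rw [sdist, sdist, real_inner_comm]

lemma sdist_le_sdiam {C : Set (E d)} {x y : E d} (hx : x ∈ C) (hy : y ∈ C) :
    sdist x y ≤ sdiam C :=
  le_csSup ⟨Real.pi, by rintro r ⟨u, -, v, -, rfl⟩; exact Real.arccos_le_pi _⟩ ⟨x, hx, y, hy, rfl⟩

lemma inner_nonneg_of_sdist_le_pi_div_two {x y : E d} (hxy : sdist x y ≤ Real.pi / 2) :
    0 ≤ ⟪x, y⟫ :=
  Real.arccos_le_pi_div_two.mp hxy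

lemma inner_le_inner_of_sdist_le {x y u v : E d} (hx : ‖x‖ = 1) (hy : ‖y‖ = 1) (hu : ‖u‖ = 1)
    (hv : ‖v‖ = 1) (hle : sdist x y ≤ sdist u v) : ⟪u, v⟫ ≤ ⟪x, y⟫ := by
  by_contra! hlt
  have := Real.arccos_lt_arccos (neg_one_le_real_inner_of_norm_eq_one hx hy) hlt
    (real_inner_le_one_of_norm_eq_one hu hv)
  exact (hle.trans_lt this).false

lemma subset_Hemi_of_sdist_eq_sdiam {C : Set (E d)} (hCS : C ⊆ Sph d)
    (hdiam : sdiam C ≤ Real.pi / 2) {a b : E d} (haC : a ∈ C) (hbC : b ∈ C)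
    (hab : sdist a b = sdiam C) {g h : E d} (hg : g ∈ Sph d) (hh : h ∈ Sph d)
    (hca : cGH g h = a) (hcb : cGH h g = b) :
    C ⊆ Hemi g := by
  intro x hx
  have hS : ∀ {y}, y ∈ C → ‖y‖ = 1 := fun hy => mem_Sph_iff.mp (hCS hy)
  rw [mem_Sph_iff] at hg hh
  have hs : 0 < ‖h - ⟪g, h⟫ • g‖ :=
    norm_pos_of_nrm_mem_Sph (show cGH g h ∈ Sph d from hca ▸ hCS haC)
  have ht : ⟪g, h⟫ ^ 2 < 1 := by nlinarith [norm_sub_inner_smul_sq hg hh]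
  have hab0 : 0 ≤ ⟪a, b⟫ := inner_nonneg_of_sdist_le_pi_div_two (hab ▸ hdiam)
  have hbx : ⟪a, b⟫ ≤ ⟪b, x⟫ :=
    inner_le_inner_of_sdist_le (hS hbC) (hS hx) (hS haC) (hS hbC) (hab ▸ sdist_le_sdiam hbC hx)
  have hax : ⟪a, x⟫ ≤ 1 := real_inner_le_one_of_norm_eq_one (hS haC) (hS hx)
  have hkey := norm_sub_inner_smul_mul_inner hg hh ht x
  rw [hca, hcb] at hkey
  refine ⟨hCS hx, nonneg_of_mul_nonneg_right ?_ hs⟩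
  rw [hkey]
  nlinarith

theorem stmt6_general {d : ℕ} (C : Set (E d)) (hC : IsBody C)
    (hdiam : sdiam C ≤ Real.pi / 2)
    (a b : E d) (haC : a ∈ C) (hbC : b ∈ C) (hab : sdist a b = sdiam C)
    (g h : E d) (hg : g ∈ Sph d) (hh : h ∈ Sph d)
    (hca : cGH g h = a) (hcb : cGH h g = b) :
    C ⊆ Hemi g ∩ Hemi h :=
  subset_inter (subset_Hemi_of_sdist_eq_sdiam hC.1 hdiam haC hbC hab hg hh hca hcb)
    (subset_Hemi_of_sdist_eq_sdiam hC.1 hdiam hbC haC ((sdist_comm b a).trans hab) hh hg hcb hca)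

/-- a convex body of diameter at most `π/2` is contained in the
lune whose bounding hemisphere centers are a diametral pair of the body. -/
theorem stmt6 {d : ℕ} (C : Set (E d)) (hC : IsBody C)
    (hdiam : sdiam C ≤ Real.pi / 2)
    (a b : E d) (haC : a ∈ C) (hbC : b ∈ C) (hab : sdist a b = sdiam C)
    (g h : E d) (hg : g ∈ Sph d) (hh : h ∈ Sph d) (hne : g ≠ h) (hno : g ≠ -h)
    (hca : cGH g h = a) (hcb : cGH h g = b) :
    C ⊆ Hemi g ∩ Hemi h :=
  stmt6_general C hC hdiam a b haC hbC hab g h hg hh hca hcb
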